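/- Let (A,C)_ψ be a factorisable entwining structure, B = C^{*op}, X = B#_ψ̄A. The map θ from the k-module of integrals Int(B#_ψ̄A) = {λ ∈ Hom(B,A) : a·λ = λ·a for all a ∈ A} to the k-module of (A,X)-bimodule maps _AHom_X(X, Hom(B,A)), given by θ(λ)(x) = λ·x, is a k-module isomorphism with inverse φ ↦ φ(1_X). -/

import Mathlib

open TensorProduct LinearMap

noncomputable section

variable (k A C : Type*) [CommRing k] [Ring A] [Algebra k A]
  [AddCommGroup C] [Module k C] [Coalgebra k C]

/-- An entwining structure `(A,C)_ψ` over `k`. -/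
structure Entwining where
  psi : C ⊗[k] A →ₗ[k] A ⊗[k] C
  mul_compat :
    psi ∘ₗ lTensor C (LinearMap.mul' k A)
      = rTensor C (LinearMap.mul' k A)
        ∘ₗ (TensorProduct.assoc k A A C).symm.toLinearMap
        ∘ₗ lTensor A psi
        ∘ₗ (TensorProduct.assoc k A C A).toLinearMap
        ∘ₗ rTensor A psi
        ∘ₗ (TensorProduct.assoc k C A A).symm.toLinearMap
  one_compat : ∀ c : C, psi (c ⊗ₜ[k] (1 : A)) = (1 : A) ⊗ₜ[k] c
  comul_compat :
    lTensor A (Coalgebra.comul (R := k) (A := C)) ∘ₗ psi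
      = (TensorProduct.assoc k A C C).toLinearMap
        ∘ₗ rTensor C psi
        ∘ₗ (TensorProduct.assoc k C A C).symm.toLinearMap
        ∘ₗ lTensor C psi
        ∘ₗ (TensorProduct.assoc k C C A).toLinearMap
        ∘ₗ rTensor A (Coalgebra.comul (R := k) (A := C))
  counit_compat : ∀ (c : C) (a : A),
    (TensorProduct.rid k A)
        ((lTensor A (Coalgebra.counit (R := k) (A := C))) (psi (c ⊗ₜ[k] a)))
      = Coalgebra.counit (R := k) c • a

variable {k A C} in
/-- `act` is a unital associative right `A`-action on `M`. -/
def IsRAction {M : Type*} [AddCommGroup M] [Module k M]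
    (act : M ⊗[k] A →ₗ[k] M) : Prop :=
  (∀ m : M, act (m ⊗ₜ[k] (1 : A)) = m) ∧
  act ∘ₗ lTensor M (LinearMap.mul' k A)
    = act ∘ₗ rTensor A act ∘ₗ (TensorProduct.assoc k M A A).symm.toLinearMap

variable {k A C} in
/-- `coact` is a counital coassociative right `C`-coaction on `M`. -/
def IsRCoaction {M : Type*} [AddCommGroup M] [Module k M]
    (coact : M →ₗ[k] M ⊗[k] C) : Prop :=
  (∀ m : M, (TensorProduct.rid k M)
      ((lTensor M (Coalgebra.counit (R := k) (A := C))) (coact m)) = m) ∧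
  rTensor C coact ∘ₗ coact
    = (TensorProduct.assoc k M C C).symm.toLinearMap
      ∘ₗ lTensor M (Coalgebra.comul (R := k) (A := C)) ∘ₗ coact

variable {k A C} in
/-- The compatibility condition making `(M, act, coact)` an entwined
`(A,C)_ψ`-module: `ρ^M(m·a) = m₍₀₎·a_α ⊗ m₍₁₎^α`. -/
def IsEntwinedModule (E : Entwining k A C) {M : Type*} [AddCommGroup M] [Module k M]
    (act : M ⊗[k] A →ₗ[k] M) (coact : M →ₗ[k] M ⊗[k] C) : Prop :=
  IsRAction act ∧ IsRCoaction coact ∧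
  coact ∘ₗ act
    = rTensor C act
      ∘ₗ (TensorProduct.assoc k M A C).symm.toLinearMap
      ∘ₗ lTensor M E.psi
      ∘ₗ (TensorProduct.assoc k M C A).toLinearMap
      ∘ₗ rTensor A coact

variable {k A C} in
/-- A morphism of entwined modules: right `A`-linear and right `C`-colinear. -/
def IsEntwinedHom {M N : Type*} [AddCommGroup M] [Module k M]
    [AddCommGroup N] [Module k N]
    (actM : M ⊗[k] A →ₗ[k] M) (coactM : M →ₗ[k] M ⊗[k] C)
    (actN : N ⊗[k] A →ₗ[k] N) (coactN : N →ₗ[k] N ⊗[k] C)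
    (f : M →ₗ[k] N) : Prop :=
  (f ∘ₗ actM = actN ∘ₗ rTensor A f) ∧ (coactN ∘ₗ f = rTensor C f ∘ₗ coactM)

variable {k A C} in
/-- Evaluation of the first (dual) factor at `c`: `ξ ⊗ a ↦ ξ(c) • a`. -/
def evFst (c : C) : Module.Dual k C ⊗[k] A →ₗ[k] A :=
  TensorProduct.lift ((LinearMap.lsmul k A) ∘ₗ
    (LinearMap.applyₗ (R := k) c : (C →ₗ[k] k) →ₗ[k] k))

variable {k A C} in
/-- Evaluation of the second (coalgebra) factor against `ξ`: `a ⊗ c ↦ ξ(c) • a`. -/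
def evSnd (ξ : Module.Dual k C) : A ⊗[k] C →ₗ[k] A :=
  (TensorProduct.rid k A).toLinearMap ∘ₗ lTensor A ξ

variable {k A C} in
/-- `ψ̄ : A ⊗ C* → C* ⊗ A` is a factorisation map for the entwining `ψ`:
`⟨c^α, ξ⟩ a_α = ξ_i(c) a^i`. -/
def IsFactorisation (E : Entwining k A C)
    (ψbar : A ⊗[k] Module.Dual k C →ₗ[k] Module.Dual k C ⊗[k] A) : Prop :=
  ∀ (a : A) (ξ : Module.Dual k C) (c : C),
    evFst c (ψbar (a ⊗ₜ[k] ξ)) = evSnd ξ (E.psi (c ⊗ₜ[k] a))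

/-- The product of `B = C^{*op}`, i.e. the opposite convolution product:
`⟨c, b b'⟩ = ⟨c₍₂₎, b⟩ ⟨c₍₁₎, b'⟩`, as a linear map `B ⊗ B →ₗ B`. -/
def opConv : Module.Dual k C ⊗[k] Module.Dual k C →ₗ[k] Module.Dual k C :=
  ((LinearMap.llcomp k C (C ⊗[k] C) k).flip (Coalgebra.comul (R := k) (A := C)))
  ∘ₗ (LinearMap.llcomp k (C ⊗[k] C) (k ⊗[k] k) k (LinearMap.mul' k k))
  ∘ₗ TensorProduct.homTensorHomMap (RingHom.id k) C C k k
  ∘ₗ (TensorProduct.comm k (Module.Dual k C) (Module.Dual k C)).toLinearMap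

variable {k A C} in
/-- The multiplication of the smash product `B #_ψ̄ A` on `B ⊗ A`, `B = C^{*op}`:
`(b ⊗ a)(b' ⊗ a') = b ψ̄(a ⊗ b') a'`. -/
def smashMul (ψbar : A ⊗[k] Module.Dual k C →ₗ[k] Module.Dual k C ⊗[k] A) :
    (Module.Dual k C ⊗[k] A) ⊗[k] (Module.Dual k C ⊗[k] A) →ₗ[k]
      Module.Dual k C ⊗[k] A :=
  rTensor A (opConv k C)
  ∘ₗ (TensorProduct.assoc k (Module.Dual k C) (Module.Dual k C) A).symm.toLinearMap
  ∘ₗ lTensor (Module.Dual k C) (lTensor (Module.Dual k C) (LinearMap.mul' k A))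
  ∘ₗ lTensor (Module.Dual k C) (TensorProduct.assoc k (Module.Dual k C) A A).toLinearMap
  ∘ₗ lTensor (Module.Dual k C) (rTensor A ψbar)
  ∘ₗ lTensor (Module.Dual k C) (TensorProduct.assoc k A (Module.Dual k C) A).symm.toLinearMap
  ∘ₗ (TensorProduct.assoc k (Module.Dual k C) A (Module.Dual k C ⊗[k] A)).toLinearMap

/-- The unit `ε ⊗ 1_A` of the smash product. -/
def smashOne : Module.Dual k C ⊗[k] A :=
  (Coalgebra.counit (R := k) (A := C)) ⊗ₜ[k] (1 : A)

variable {k A C} in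
/-- The map `X ⊗ B → X` underlying the right `X`-action on `Hom(B,N)`:
`(b ⊗ a) ⊗ b' ↦ (b b'_i) ⊗ a^i` where `ψ̄(a ⊗ b') = b'_i ⊗ a^i`. -/
def homActAux (ψbar : A ⊗[k] Module.Dual k C →ₗ[k] Module.Dual k C ⊗[k] A) :
    (Module.Dual k C ⊗[k] A) ⊗[k] Module.Dual k C →ₗ[k]
      Module.Dual k C ⊗[k] A :=
  rTensor A (opConv k C)
  ∘ₗ (TensorProduct.assoc k (Module.Dual k C) (Module.Dual k C) A).symm.toLinearMap
  ∘ₗ lTensor (Module.Dual k C) ψbar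
  ∘ₗ (TensorProduct.assoc k (Module.Dual k C) A (Module.Dual k C)).toLinearMap

variable {k A C} in
/-- The right `X`-action on `Hom(B,N)` (`X = B #_ψ̄ A`, `B = C^{*op}`, `N` a
right `A`-module): `(f · (b ⊗ a))(b') = f(b b'_i) · a^i`. -/
def homAct {N : Type*} [AddCommGroup N] [Module k N]
    (actN : N ⊗[k] A →ₗ[k] N)
    (ψbar : A ⊗[k] Module.Dual k C →ₗ[k] Module.Dual k C ⊗[k] A)
    (f : Module.Dual k C →ₗ[k] N) (x : Module.Dual k C ⊗[k] A) :
    Module.Dual k C →ₗ[k] N :=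
  actN ∘ₗ rTensor A f ∘ₗ homActAux ψbar
    ∘ₗ TensorProduct.mk k (Module.Dual k C ⊗[k] A) (Module.Dual k C) x

variable {k A C} in
/-- `actX` is a unital associative right action of the smash product
`X = B #_ψ̄ A` on `M`. -/
def IsSmashAction (ψbar : A ⊗[k] Module.Dual k C →ₗ[k] Module.Dual k C ⊗[k] A)
    {M : Type*} [AddCommGroup M] [Module k M]
    (actX : M ⊗[k] (Module.Dual k C ⊗[k] A) →ₗ[k] M) : Prop :=
  (∀ m : M, actX (m ⊗ₜ[k] smashOne k A C) = m) ∧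
  actX ∘ₗ lTensor M (smashMul ψbar)
    = actX ∘ₗ rTensor (Module.Dual k C ⊗[k] A) actX
      ∘ₗ (TensorProduct.assoc k M (Module.Dual k C ⊗[k] A)
          (Module.Dual k C ⊗[k] A)).symm.toLinearMap

variable {k A C} in
/-- `f : M → Hom(B,N)` is a morphism of right `X`-modules. -/
def IsHomBXLinear (ψbar : A ⊗[k] Module.Dual k C →ₗ[k] Module.Dual k C ⊗[k] A)
    {M N : Type*} [AddCommGroup M] [Module k M] [AddCommGroup N] [Module k N]
    (actX : M ⊗[k] (Module.Dual k C ⊗[k] A) →ₗ[k] M)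
    (actN : N ⊗[k] A →ₗ[k] N)
    (f : M →ₗ[k] (Module.Dual k C →ₗ[k] N)) : Prop :=
  ∀ (m : M) (x : Module.Dual k C ⊗[k] A),
    f (actX (m ⊗ₜ[k] x)) = homAct actN ψbar (f m) x

variable {k A C} in
/-- `λ : B → A` is an integral in `B #_ψ̄ A`: `a·λ = λ·a` for all `a ∈ A`. -/
def IsSmashIntegral (ψbar : A ⊗[k] Module.Dual k C →ₗ[k] Module.Dual k C ⊗[k] A)
    (lam : Module.Dual k C →ₗ[k] A) : Prop :=
  ∀ a : A,
    (LinearMap.mulLeft k a) ∘ₗ lam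
      = homAct (LinearMap.mul' k A) ψbar lam
          ((Coalgebra.counit (R := k) (A := C)) ⊗ₜ[k] a)

variable {k A C} in
/-- `Φ : X → Hom(B,A)` is an `(A,X)`-bimodule map. -/
def IsBimoduleMap (ψbar : A ⊗[k] Module.Dual k C →ₗ[k] Module.Dual k C ⊗[k] A)
    (Φ : Module.Dual k C ⊗[k] A →ₗ[k] (Module.Dual k C →ₗ[k] A)) : Prop :=
  (∀ x x' : Module.Dual k C ⊗[k] A,
    Φ (smashMul ψbar (x ⊗ₜ[k] x')) = homAct (LinearMap.mul' k A) ψbar (Φ x) x') ∧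
  (∀ (a : A) (x : Module.Dual k C ⊗[k] A),
    Φ (smashMul ψbar (((Coalgebra.counit (R := k) (A := C)) ⊗ₜ[k] a) ⊗ₜ[k] x))
      = (LinearMap.mulLeft k a) ∘ₗ Φ x)

/-!
A finite dual basis of `C` makes evaluation `C* ⊗ A → Hom(C, A)` injective, so the
factorisation condition determines `ψ̄` and turns the axioms of the entwining into the
twisting-map identities `ψ̄(1 ⊗ ξ) = ξ ⊗ 1`, `ψ̄(a ⊗ ε) = ε ⊗ a`,
`ψ̄(a a' ⊗ ξ) = (ε ⊗ a) · ψ̄(a' ⊗ ξ)` and `ψ̄(a ⊗ b g) = ψ̄(a ⊗ b) · g`.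
These make `X = B #_ψ̄ A` unital and `Hom(B, A)` a unital right `X`-module whose action
commutes with left multiplication by `A`. The theorem is then the identification of right
`X`-linear maps `Φ : X → Hom(B, A)` with their values `λ = Φ(1)`, and the bimodule
condition becomes the integral condition:
`a · λ = Φ((ε ⊗ a) · 1) = Φ(1 · (ε ⊗ a)) = λ · (ε ⊗ a)`.
-/

section Evaluation

variable {k A C : Type*} [CommRing k] [Ring A] [Algebra k A] [AddCommGroup C] [Module k C]

theorem evFst_tmul (c : C) (ξ : Module.Dual k C) (a : A) :
    evFst c (ξ ⊗ₜ[k] a) = ξ c • a := by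
  simp [evFst]

theorem evFst_lTensor_mulRight (c : C) (a : A) (s : Module.Dual k C ⊗[k] A) :
    evFst c (lTensor _ (mulRight k a) s) = evFst c s * a := by
  induction s using TensorProduct.induction_on with
  | zero => simp
  | tmul ξ a' => simp [evFst_tmul]
  | add s t hs ht => simp only [map_add, hs, ht, add_mul]

end Evaluation

theorem mul'_rTensor_lTensor_mulRight {k A M : Type*} [CommRing k] [Ring A] [Algebra k A]
    [AddCommGroup M] [Module k M] (g : M →ₗ[k] A) (a : A) (t : M ⊗[k] A) :
    mul' k A (rTensor A g (lTensor M (mulRight k a) t)) = mul' k A (rTensor A g t) * a := by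
  induction t using TensorProduct.induction_on with
  | zero => simp
  | tmul m a' => simp [mul_assoc]
  | add s t hs ht => simp only [map_add, hs, ht, add_mul]

structure FiniteDualBasis (k C : Type*) [CommRing k] [AddCommGroup C] [Module k C] where
  n : ℕ
  vec : Fin n → C
  coord : Fin n → Module.Dual k C
  sum_coord_smul_vec : ∀ x : C, ∑ i, coord i x • vec i = x

namespace FiniteDualBasis

theorem nonempty (k C : Type*) [CommRing k] [AddCommGroup C] [Module k C]
    [Module.Finite k C] [Module.Projective k C] : Nonempty (FiniteDualBasis k C) := by
  obtain ⟨n, π, hπ⟩ := Module.Finite.exists_fin' k C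
  obtain ⟨σ, hσ⟩ := Module.projective_lifting_property π LinearMap.id hπ
  refine ⟨⟨n, fun i => π (Pi.single i 1), fun i => LinearMap.proj i ∘ₗ σ,
    fun x => ?_⟩⟩
  calc ∑ i, (LinearMap.proj i ∘ₗ σ) x • π (Pi.single i 1)
      = π (∑ i, Pi.single i (σ x i)) := by
        simp only [map_sum, ← map_smul, LinearMap.comp_apply, LinearMap.proj_apply,
          ← Pi.single_smul, smul_eq_mul, mul_one]
    _ = x := by rw [Finset.univ_sum_single, ← LinearMap.comp_apply, hσ, LinearMap.id_apply]

variable {k A C : Type*} [CommRing k] [Ring A] [Algebra k A] [AddCommGroup C] [Module k C]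

theorem sum_apply_vec_smul_coord (D : FiniteDualBasis k C) (η : Module.Dual k C) :
    ∑ i, η (D.vec i) • D.coord i = η := by
  ext x
  conv_rhs => rw [← D.sum_coord_smul_vec x]
  simp [mul_comm]

theorem sum_coord_tmul_evFst (D : FiniteDualBasis k C) (s : Module.Dual k C ⊗[k] A) :
    ∑ i, D.coord i ⊗ₜ[k] evFst (D.vec i) s = s := by
  induction s using TensorProduct.induction_on with
  | zero => simp
  | tmul η a =>
    simp only [evFst_tmul, tmul_smul]
    conv_rhs => rw [← D.sum_apply_vec_smul_coord η, sum_tmul]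
    simp only [smul_tmul']
  | add s t hs ht => simp only [map_add, tmul_add, Finset.sum_add_distrib, hs, ht]

theorem ext_evFst (D : FiniteDualBasis k C) {s t : Module.Dual k C ⊗[k] A}
    (h : ∀ c, evFst c s = evFst c t) : s = t := by
  rw [← D.sum_coord_tmul_evFst s, ← D.sum_coord_tmul_evFst t]
  simp only [h]

end FiniteDualBasis

section OppositeConvolution

variable {k A C : Type*} [CommRing k] [Ring A] [Algebra k A]
  [AddCommGroup C] [Module k C] [Coalgebra k C]

def opConvLeft (b : Module.Dual k C) : Module.Dual k C →ₗ[k] Module.Dual k C :=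
  opConv k C ∘ₗ TensorProduct.mk k _ _ b

@[simp]
theorem opConvLeft_apply (b g : Module.Dual k C) : opConvLeft b g = opConv k C (b ⊗ₜ[k] g) :=
  rfl

theorem opConv_tmul_apply (b g : Module.Dual k C) (c : C) :
    opConv k C (b ⊗ₜ[k] g) c = LinearMap.mul' k k (TensorProduct.map g b (Coalgebra.comul c)) :=
  rfl

theorem opConv_counit_tmul (b : Module.Dual k C) :
    opConv k C (Coalgebra.counit ⊗ₜ[k] b) = b := by
  ext c
  rw [opConv_tmul_apply, ← rTensor_comp_lTensor, LinearMap.comp_apply,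
    Coalgebra.lTensor_counit_comul, rTensor_tmul, mul'_apply, mul_one]

theorem opConv_tmul_counit (b : Module.Dual k C) :
    opConv k C (b ⊗ₜ[k] Coalgebra.counit) = b := by
  ext c
  rw [opConv_tmul_apply, ← lTensor_comp_rTensor, LinearMap.comp_apply,
    Coalgebra.rTensor_counit_comul, lTensor_tmul, mul'_apply, one_mul]

theorem opConvLeft_counit : opConvLeft (k := k) (C := C) Coalgebra.counit = LinearMap.id :=
  LinearMap.ext opConv_counit_tmul

theorem opConv_assoc (b b' b'' : Module.Dual k C) :
    opConv k C (opConv k C (b ⊗ₜ[k] b') ⊗ₜ[k] b'') =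
      opConv k C (b ⊗ₜ[k] opConv k C (b' ⊗ₜ[k] b'')) := by
  have h : mul' k k ∘ₗ map b'' (mul' k k ∘ₗ map b' b)
        ∘ₗ (TensorProduct.assoc k C C C).toLinearMap
      = mul' k k ∘ₗ map (mul' k k ∘ₗ map b'' b') b := by
    ext x y z
    simp [mul_assoc]
  ext c
  have hc := LinearMap.congr_fun h (rTensor C Coalgebra.comul (Coalgebra.comul (R := k) c))
  simp only [LinearMap.comp_apply, LinearEquiv.coe_coe, Coalgebra.coassoc_apply, map_lTensor,
    map_rTensor] at hc
  exact hc

theorem opConvLeft_comp (b b' : Module.Dual k C) :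
    opConvLeft b ∘ₗ opConvLeft b' = opConvLeft (opConv k C (b ⊗ₜ[k] b')) :=
  LinearMap.ext fun g => (opConv_assoc b b' g).symm

theorem evSnd_opConv (b g : Module.Dual k C) (s : A ⊗[k] C) :
    evSnd (opConv k C (b ⊗ₜ[k] g)) s =
      TensorProduct.rid k A
        (lTensor A (mul' k k ∘ₗ map g b) (lTensor A Coalgebra.comul s)) := by
  induction s using TensorProduct.induction_on with
  | zero => simp
  | tmul a c => simp [evSnd, opConv_tmul_apply]
  | add u v hu hv => simp only [map_add, hu, hv]

end OppositeConvolution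

namespace Entwining

variable {k A C : Type*} [CommRing k] [Ring A] [Algebra k A]
  [AddCommGroup C] [Module k C] [Coalgebra k C] (E : Entwining k A C)

/-- `E.pairing c (a ⊗ ξ) = ⟨c^α, ξ⟩ a_α`, where `ψ(c ⊗ a) = a_α ⊗ c^α`. -/
def pairing : C →ₗ[k] A ⊗[k] Module.Dual k C →ₗ[k] A :=
  TensorProduct.curry ((TensorProduct.rid k A).toLinearMap ∘ₗ lTensor A (contractRight k C)
    ∘ₗ (TensorProduct.assoc k A C (Module.Dual k C)).toLinearMap ∘ₗ rTensor _ E.psi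
    ∘ₗ (TensorProduct.assoc k C A (Module.Dual k C)).symm.toLinearMap)

theorem pairing_tmul (c : C) (a : A) (ξ : Module.Dual k C) :
    E.pairing c (a ⊗ₜ[k] ξ) = evSnd ξ (E.psi (c ⊗ₜ[k] a)) := by
  simp only [pairing, curry_apply, LinearMap.comp_apply, LinearEquiv.coe_coe, assoc_symm_tmul,
    rTensor_tmul]
  induction E.psi (c ⊗ₜ[k] a) using TensorProduct.induction_on with
  | zero => simp
  | tmul a' c' => simp [evSnd]
  | add u v hu hv => simp only [add_tmul, map_add, hu, hv]

theorem pairing_one_tmul (c : C) (ξ : Module.Dual k C) :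
    E.pairing c (1 ⊗ₜ[k] ξ) = ξ c • 1 := by
  simp [pairing_tmul, E.one_compat, evSnd]

theorem pairing_tmul_counit (c : C) (a : A) :
    E.pairing c (a ⊗ₜ[k] Coalgebra.counit) = Coalgebra.counit (R := k) c • a := by
  rw [pairing_tmul, ← E.counit_compat]
  rfl

theorem sum_coord_smul_pairing (D : FiniteDualBasis k C) (c : C) (t : A ⊗[k] Module.Dual k C) :
    ∑ i, D.coord i c • E.pairing (D.vec i) t = E.pairing c t := by
  conv_rhs => rw [← D.sum_coord_smul_vec c]
  simp

theorem pairing_mul_tmul (D : FiniteDualBasis k C) (c : C) (a a' : A) (ξ : Module.Dual k C) :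
    E.pairing c ((a * a') ⊗ₜ[k] ξ) =
      ∑ j, E.pairing c (a ⊗ₜ[k] D.coord j) * E.pairing (D.vec j) (a' ⊗ₜ[k] ξ) := by
  have evSnd_mul_left : ∀ (a₀ : A) (t : A ⊗[k] C), evSnd ξ (rTensor C (mul' k A)
      ((TensorProduct.assoc k A A C).symm (a₀ ⊗ₜ[k] t))) = a₀ * evSnd ξ t := by
    intro a₀ t
    induction t using TensorProduct.induction_on with
    | zero => simp
    | tmul a₁ c₁ => simp [evSnd]
    | add u v hu hv => simp only [tmul_add, map_add, hu, hv, mul_add]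
  have hψ := LinearMap.congr_fun E.mul_compat (c ⊗ₜ[k] (a ⊗ₜ[k] a'))
  simp only [LinearMap.comp_apply, LinearEquiv.coe_coe, lTensor_tmul, mul'_apply,
    assoc_symm_tmul, rTensor_tmul] at hψ
  simp only [pairing_tmul, hψ]
  induction E.psi (c ⊗ₜ[k] a) using TensorProduct.induction_on with
  | zero => simp
  | tmul a₀ c₀ =>
    rw [assoc_tmul, lTensor_tmul, evSnd_mul_left, ← pairing_tmul,
      ← E.sum_coord_smul_pairing D c₀, Finset.mul_sum]
    simp [evSnd, pairing_tmul]
  | add u v hu hv => simp only [add_tmul, map_add, hu, hv, add_mul, Finset.sum_add_distrib]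

theorem pairing_tmul_opConv (D : FiniteDualBasis k C) (c : C) (a : A) (b g : Module.Dual k C) :
    E.pairing c (a ⊗ₜ[k] opConv k C (b ⊗ₜ[k] g)) =
      ∑ i, ∑ j, opConv k C (D.coord i ⊗ₜ[k] D.coord j) c •
        E.pairing (D.vec j) (E.pairing (D.vec i) (a ⊗ₜ[k] b) ⊗ₜ[k] g) := by
  -- Both sides are `∑ pairing c₍₁₎ (pairing c₍₂₎ (a ⊗ b) ⊗ g)`, the left one by
  -- `comul_compat`.
  have contract_assoc : ∀ (c₁ : C) (s : A ⊗[k] C),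
      TensorProduct.rid k A (lTensor A (mul' k k ∘ₗ map g b) (TensorProduct.assoc k A C C
        (rTensor C E.psi ((TensorProduct.assoc k C A C).symm (c₁ ⊗ₜ[k] s))))) =
        E.pairing c₁ (evSnd b s ⊗ₜ[k] g) := by
    intro c₁ s
    induction s using TensorProduct.induction_on with
    | zero => simp
    | tmul a₁ c₂ =>
      simp only [assoc_symm_tmul, rTensor_tmul, evSnd, LinearMap.comp_apply, LinearEquiv.coe_coe,
        lTensor_tmul, rid_tmul]
      rw [← smul_tmul', map_smul, pairing_tmul]
      induction E.psi (c₁ ⊗ₜ[k] a₁) using TensorProduct.induction_on with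
      | zero => simp
      | tmul a₂ c₃ => simp [evSnd, smul_smul, mul_comm]
      | add u v hu hv => simp only [add_tmul, map_add, hu, hv, smul_add]
    | add u v hu hv => simp only [tmul_add, map_add, add_tmul, hu, hv]
  have hψ := LinearMap.congr_fun E.comul_compat (c ⊗ₜ[k] a)
  simp only [LinearMap.comp_apply, LinearEquiv.coe_coe, rTensor_tmul] at hψ
  simp only [opConv_tmul_apply]
  rw [pairing_tmul, evSnd_opConv, hψ]
  induction Coalgebra.comul (R := k) c using TensorProduct.induction_on with
  | zero => simp
  | tmul c₁ c₂ =>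
    rw [assoc_tmul, lTensor_tmul, contract_assoc, ← pairing_tmul]
    simp only [map_tmul, mul'_apply, mul_comm (D.coord _ c₁), ← smul_smul, ← Finset.smul_sum,
      E.sum_coord_smul_pairing]
    rw [← E.sum_coord_smul_pairing D c₂ (a ⊗ₜ[k] b), sum_tmul, map_sum]
    simp only [← smul_tmul', map_smul]
  | add u v hu hv => simp only [add_tmul, map_add, hu, hv, add_smul, Finset.sum_add_distrib]

end Entwining

section SmashProduct

variable {k A C : Type*} [CommRing k] [Ring A] [Algebra k A]
  [AddCommGroup C] [Module k C] [Coalgebra k C]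
  (ψbar : A ⊗[k] Module.Dual k C →ₗ[k] Module.Dual k C ⊗[k] A)

theorem homActAux_tmul (b : Module.Dual k C) (a : A) (d : Module.Dual k C) :
    homActAux ψbar ((b ⊗ₜ[k] a) ⊗ₜ[k] d) =
      rTensor A (opConvLeft b) (ψbar (a ⊗ₜ[k] d)) := by
  simp only [homActAux, LinearMap.comp_apply, LinearEquiv.coe_coe, assoc_tmul, lTensor_tmul]
  induction ψbar (a ⊗ₜ[k] d) using TensorProduct.induction_on with
  | zero => simp
  | tmul ξ a' => simp
  | add s t hs ht => simp only [tmul_add, map_add, hs, ht]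

theorem smashMul_tmul (x : Module.Dual k C ⊗[k] A) (b : Module.Dual k C) (a : A) :
    smashMul ψbar (x ⊗ₜ[k] (b ⊗ₜ[k] a)) =
      lTensor _ (mulRight k a) (homActAux ψbar (x ⊗ₜ[k] b)) := by
  induction x using TensorProduct.induction_on with
  | zero => simp
  | tmul b' a' =>
    rw [homActAux_tmul]
    simp only [smashMul, LinearMap.comp_apply, LinearEquiv.coe_coe, assoc_tmul, lTensor_tmul,
      assoc_symm_tmul, rTensor_tmul]
    induction ψbar (a' ⊗ₜ[k] b) using TensorProduct.induction_on with
    | zero => simp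
    | tmul ξ a'' => simp
    | add s t hs ht => simp only [add_tmul, tmul_add, map_add, hs, ht]
  | add s t hs ht => simp only [add_tmul, map_add, hs, ht]

theorem homActAux_rTensor_opConvLeft (b g : Module.Dual k C) (s : Module.Dual k C ⊗[k] A) :
    homActAux ψbar (rTensor A (opConvLeft b) s ⊗ₜ[k] g) =
      rTensor A (opConvLeft b) (homActAux ψbar (s ⊗ₜ[k] g)) := by
  induction s using TensorProduct.induction_on with
  | zero => simp
  | tmul ξ a => rw [rTensor_tmul, homActAux_tmul, homActAux_tmul, opConvLeft_apply,
      ← opConvLeft_comp, rTensor_comp, LinearMap.comp_apply]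
  | add s t hs ht => simp only [map_add, add_tmul, hs, ht]

end SmashProduct

namespace IsFactorisation

variable {k A C : Type*} [CommRing k] [Ring A] [Algebra k A]
  [AddCommGroup C] [Module k C] [Coalgebra k C] {E : Entwining k A C}
  {ψbar : A ⊗[k] Module.Dual k C →ₗ[k] Module.Dual k C ⊗[k] A}

theorem evFst_apply (hfact : IsFactorisation E ψbar) (c : C) (t : A ⊗[k] Module.Dual k C) :
    evFst c (ψbar t) = E.pairing c t := by
  induction t using TensorProduct.induction_on with
  | zero => simp
  | tmul a ξ => rw [hfact a ξ c, Entwining.pairing_tmul]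
  | add u v hu hv => simp only [map_add, hu, hv]

theorem eq_sum (hfact : IsFactorisation E ψbar) (D : FiniteDualBasis k C)
    (t : A ⊗[k] Module.Dual k C) :
    ψbar t = ∑ i, D.coord i ⊗ₜ[k] E.pairing (D.vec i) t := by
  conv_lhs => rw [← D.sum_coord_tmul_evFst (ψbar t)]
  simp only [hfact.evFst_apply]

theorem one_tmul (hfact : IsFactorisation E ψbar) (D : FiniteDualBasis k C)
    (ξ : Module.Dual k C) : ψbar (1 ⊗ₜ[k] ξ) = ξ ⊗ₜ[k] 1 :=
  D.ext_evFst fun c => by rw [hfact.evFst_apply, E.pairing_one_tmul, evFst_tmul]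

theorem tmul_counit (hfact : IsFactorisation E ψbar) (D : FiniteDualBasis k C) (a : A) :
    ψbar (a ⊗ₜ[k] Coalgebra.counit) = Coalgebra.counit ⊗ₜ[k] a :=
  D.ext_evFst fun c => by rw [hfact.evFst_apply, E.pairing_tmul_counit, evFst_tmul]

theorem mul_tmul (hfact : IsFactorisation E ψbar) (D : FiniteDualBasis k C)
    (a a' : A) (ξ : Module.Dual k C) :
    ψbar ((a * a') ⊗ₜ[k] ξ) =
      smashMul ψbar ((Coalgebra.counit ⊗ₜ[k] a) ⊗ₜ[k] ψbar (a' ⊗ₜ[k] ξ)) := by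
  refine D.ext_evFst fun c => ?_
  rw [hfact.evFst_apply, E.pairing_mul_tmul D, hfact.eq_sum D (a' ⊗ₜ[k] ξ), tmul_sum, map_sum,
    map_sum]
  simp only [smashMul_tmul, homActAux_tmul, opConvLeft_counit, rTensor_id, LinearMap.id_apply,
    evFst_lTensor_mulRight, hfact.evFst_apply]

theorem tmul_opConv (hfact : IsFactorisation E ψbar) (D : FiniteDualBasis k C)
    (a : A) (b g : Module.Dual k C) :
    ψbar (a ⊗ₜ[k] opConv k C (b ⊗ₜ[k] g)) =
      homActAux ψbar (ψbar (a ⊗ₜ[k] b) ⊗ₜ[k] g) := by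
  refine D.ext_evFst fun c => ?_
  rw [hfact.evFst_apply, E.pairing_tmul_opConv D, hfact.eq_sum D (a ⊗ₜ[k] b), sum_tmul, map_sum,
    map_sum]
  simp only [homActAux_tmul, hfact.eq_sum D, map_sum, rTensor_tmul, opConvLeft_apply, evFst_tmul]

end IsFactorisation

section HomAction

variable {k A C : Type*} [CommRing k] [Ring A] [Algebra k A]
  [AddCommGroup C] [Module k C] [Coalgebra k C]
  (ψbar : A ⊗[k] Module.Dual k C →ₗ[k] Module.Dual k C ⊗[k] A)

theorem homAct_apply (f : Module.Dual k C →ₗ[k] A) (x : Module.Dual k C ⊗[k] A)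
    (d : Module.Dual k C) :
    homAct (mul' k A) ψbar f x d = mul' k A (rTensor A f (homActAux ψbar (x ⊗ₜ[k] d))) :=
  rfl

@[simp]
theorem homAct_zero (f : Module.Dual k C →ₗ[k] A) : homAct (mul' k A) ψbar f 0 = 0 := by
  ext d
  simp [homAct_apply]

@[simp]
theorem homAct_add (f : Module.Dual k C →ₗ[k] A) (x y : Module.Dual k C ⊗[k] A) :
    homAct (mul' k A) ψbar f (x + y) =
      homAct (mul' k A) ψbar f x + homAct (mul' k A) ψbar f y := by
  ext d
  simp [homAct_apply, add_tmul]

@[simp]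
theorem zero_homAct (x : Module.Dual k C ⊗[k] A) : homAct (mul' k A) ψbar 0 x = 0 := by
  ext d
  simp [homAct_apply]

@[simp]
theorem add_homAct (f g : Module.Dual k C →ₗ[k] A) (x : Module.Dual k C ⊗[k] A) :
    homAct (mul' k A) ψbar (f + g) x =
      homAct (mul' k A) ψbar f x + homAct (mul' k A) ψbar g x := by
  ext d
  simp [homAct_apply, rTensor_add]

theorem homAct_mulLeft (a : A) (f : Module.Dual k C →ₗ[k] A) (x : Module.Dual k C ⊗[k] A) :
    homAct (mul' k A) ψbar (mulLeft k a ∘ₗ f) x =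
      mulLeft k a ∘ₗ homAct (mul' k A) ψbar f x := by
  ext d
  simp only [homAct_apply, LinearMap.comp_apply, mulLeft_apply]
  induction homActAux ψbar (x ⊗ₜ[k] d) using TensorProduct.induction_on with
  | zero => simp
  | tmul ξ a' => simp [mul_assoc]
  | add s t hs ht => simp only [map_add, hs, ht, mul_add]

theorem homAct_tmul (f : Module.Dual k C →ₗ[k] A) (b : Module.Dual k C) (a : A) :
    homAct (mul' k A) ψbar f (b ⊗ₜ[k] a) =
      homAct (mul' k A) ψbar (f ∘ₗ opConvLeft b) (Coalgebra.counit ⊗ₜ[k] a) := by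
  ext d
  simp only [homAct_apply, homActAux_tmul, opConvLeft_counit, rTensor_id, LinearMap.id_apply,
    rTensor_comp, LinearMap.comp_apply]

end HomAction

section RightModule

variable {k A C : Type*} [CommRing k] [Ring A] [Algebra k A]
  [AddCommGroup C] [Module k C] [Coalgebra k C] {E : Entwining k A C}
  {ψbar : A ⊗[k] Module.Dual k C →ₗ[k] Module.Dual k C ⊗[k] A}

theorem homAct_homActAux (hfact : IsFactorisation E ψbar) (D : FiniteDualBasis k C)
    (f : Module.Dual k C →ₗ[k] A) (x : Module.Dual k C ⊗[k] A) (b : Module.Dual k C) :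
    homAct (mul' k A) ψbar f (homActAux ψbar (x ⊗ₜ[k] b)) =
      homAct (mul' k A) ψbar f x ∘ₗ opConvLeft b := by
  induction x using TensorProduct.induction_on with
  | zero => simp
  | tmul b₀ a =>
    ext g
    rw [homAct_apply, homActAux_tmul, homActAux_rTensor_opConvLeft, ← hfact.tmul_opConv D,
      LinearMap.comp_apply, homAct_apply, homActAux_tmul, opConvLeft_apply]
  | add x y hx hy => simp only [add_tmul, map_add, homAct_add, hx, hy, LinearMap.add_comp]

theorem homAct_lTensor_mulRight (hfact : IsFactorisation E ψbar) (D : FiniteDualBasis k C)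
    (f : Module.Dual k C →ₗ[k] A) (y : Module.Dual k C ⊗[k] A) (a : A) :
    homAct (mul' k A) ψbar f (lTensor _ (mulRight k a) y) =
      homAct (mul' k A) ψbar (homAct (mul' k A) ψbar f y) (Coalgebra.counit ⊗ₜ[k] a) := by
  induction y using TensorProduct.induction_on with
  | zero => simp
  | tmul b a₀ =>
    have key : ∀ s, mul' k A (rTensor A (f ∘ₗ opConvLeft b)
        (smashMul ψbar ((Coalgebra.counit ⊗ₜ[k] a₀) ⊗ₜ[k] s))) =
        mul' k A (rTensor A (homAct (mul' k A) ψbar f (b ⊗ₜ[k] a₀)) s) := by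
      intro s
      induction s using TensorProduct.induction_on with
      | zero => simp
      | tmul η a'' =>
        rw [smashMul_tmul, homActAux_tmul, opConvLeft_counit, rTensor_id, LinearMap.id_apply,
          mul'_rTensor_lTensor_mulRight, rTensor_tmul, mul'_apply, homAct_apply, homActAux_tmul,
          rTensor_comp_apply]
      | add s t hs ht => simp only [tmul_add, map_add, hs, ht]
    ext d
    rw [lTensor_tmul, mulRight_apply, homAct_apply, homActAux_tmul, hfact.mul_tmul D,
      ← rTensor_comp_apply, key, homAct_apply, homActAux_tmul, opConvLeft_counit, rTensor_id,
      LinearMap.id_apply]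
  | add x y hx hy => simp only [map_add, homAct_add, hx, hy, add_homAct]

theorem homAct_smashMul (hfact : IsFactorisation E ψbar) (D : FiniteDualBasis k C)
    (f : Module.Dual k C →ₗ[k] A) (x x' : Module.Dual k C ⊗[k] A) :
    homAct (mul' k A) ψbar f (smashMul ψbar (x ⊗ₜ[k] x')) =
      homAct (mul' k A) ψbar (homAct (mul' k A) ψbar f x) x' := by
  induction x' using TensorProduct.induction_on with
  | zero => simp
  | tmul b a =>
    rw [smashMul_tmul, homAct_lTensor_mulRight hfact D, homAct_homActAux hfact D, ← homAct_tmul]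
  | add x' y' hx hy => simp only [tmul_add, map_add, homAct_add, hx, hy]

theorem homAct_smashOne (hfact : IsFactorisation E ψbar) (D : FiniteDualBasis k C)
    (f : Module.Dual k C →ₗ[k] A) : homAct (mul' k A) ψbar f (smashOne k A C) = f := by
  ext d
  simp [homAct_apply, smashOne, homActAux_tmul, opConvLeft_counit, hfact.one_tmul D]

theorem smashOne_smashMul (hfact : IsFactorisation E ψbar) (D : FiniteDualBasis k C)
    (x : Module.Dual k C ⊗[k] A) : smashMul ψbar (smashOne k A C ⊗ₜ[k] x) = x := by
  induction x using TensorProduct.induction_on with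
  | zero => simp
  | tmul b a =>
    simp [smashMul_tmul, smashOne, homActAux_tmul, hfact.one_tmul D, opConv_counit_tmul]
  | add x y hx hy => simp only [tmul_add, map_add, hx, hy]

theorem smashMul_smashOne (hfact : IsFactorisation E ψbar) (D : FiniteDualBasis k C)
    (x : Module.Dual k C ⊗[k] A) : smashMul ψbar (x ⊗ₜ[k] smashOne k A C) = x := by
  induction x using TensorProduct.induction_on with
  | zero => simp
  | tmul b a =>
    simp [smashMul_tmul, smashOne, homActAux_tmul, hfact.tmul_counit D, opConv_tmul_counit]
  | add x y hx hy => simp only [add_tmul, map_add, hx, hy]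

end RightModule

/-- `θ : Int(B #_ψ̄ A) → _AHom_X(X, Hom(B,A))`, `θ(λ)(x) = λ·x`,
is a bijection with inverse `Φ ↦ Φ(1_X)`. -/
theorem integrals_bijective_bimoduleMaps [Module.Finite k C] [Module.Projective k C]
    (E : Entwining k A C)
    (ψbar : A ⊗[k] Module.Dual k C →ₗ[k] Module.Dual k C ⊗[k] A)
    (hfact : IsFactorisation E ψbar) :
    -- `θ(λ)(x)(b') = (λ·x)(b')`
    let θ : (Module.Dual k C →ₗ[k] A) →
        (Module.Dual k C ⊗[k] A →ₗ[k] (Module.Dual k C →ₗ[k] A)) :=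
      fun lam => TensorProduct.curry
        ((LinearMap.mul' k A) ∘ₗ rTensor A lam ∘ₗ homActAux ψbar)
    -- `θ` maps integrals to bimodule maps:
    (∀ lam, IsSmashIntegral ψbar lam → IsBimoduleMap ψbar (θ lam)) ∧
    -- `Φ ↦ Φ(1_X)` is a left inverse of `θ` (so `θ` is injective on integrals):
    (∀ lam, IsSmashIntegral ψbar lam → θ lam (smashOne k A C) = lam) ∧
    -- and a right inverse: every bimodule map `Φ` is `θ` of the integral `Φ(1_X)`:
    (∀ Φ, IsBimoduleMap ψbar Φ →
      IsSmashIntegral ψbar (Φ (smashOne k A C)) ∧ θ (Φ (smashOne k A C)) = Φ) := by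
  intro θ
  obtain ⟨D⟩ := FiniteDualBasis.nonempty k C
  have hθ : ∀ lam x, θ lam x = homAct (mul' k A) ψbar lam x := fun _ _ => rfl
  refine ⟨fun lam hlam => ⟨fun x x' => ?_, fun a x => ?_⟩, fun lam _ => ?_,
    fun Φ hΦ => ⟨fun a => ?_, LinearMap.ext fun x => ?_⟩⟩
  · simp only [hθ, homAct_smashMul hfact D]
  · rw [hθ, hθ, homAct_smashMul hfact D, ← hlam, homAct_mulLeft]
  · rw [hθ, homAct_smashOne hfact D]
  · rw [← hΦ.2, smashMul_smashOne hfact D, ← hΦ.1, smashOne_smashMul hfact D]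
  · rw [hθ, ← hΦ.1, smashOne_smashMul hfact D]
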